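/- Let a,b > 0 and u ∈ ℝ² with u ≠ 0 and a ≠ b, and define d(s,t)² = 4|u|² sin²((t−s)/2) + (1/2)(a²+b² − √((a²+b²)² cos²(t−s) + 4a²b² sin²(t−s))). Then 4|u|² ≠ 4|u|² + (a−b)², so the constraint d(0,π)² = 2 d(0,π/2)² required for four equally-spaced points forming an inscribed square fails; hence there is no isometric embedding of ([0,2π], d) into a planar circle. -/
import Mathlib


open Real

/-- `d(s,t)² = 4|u|² sin²((t−s)/2) + (1/2)(a²+b² − √((a²+b²)² cos²(t−s) + 4a²b² sin²(t−s)))`: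
the squared W₂ distance between rotations of the uniform measure on the ellipse centered at
`u` with semi-axes `a, b`. -/
noncomputable def dsq (u : EuclideanSpace ℝ (Fin 2)) (a b s t : ℝ) : ℝ :=
  4 * ‖u‖ ^ 2 * Real.sin ((t - s) / 2) ^ 2 +
  (1 / 2) * (a ^ 2 + b ^ 2 -
    Real.sqrt ((a ^ 2 + b ^ 2) ^ 2 * Real.cos (t - s) ^ 2
      + 4 * a ^ 2 * b ^ 2 * Real.sin (t - s) ^ 2))

lemma dsq_zero_pi (u : EuclideanSpace ℝ (Fin 2)) (a b : ℝ) (ha : 0 < a) (hb : 0 < b) :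
    dsq u a b 0 π = 4 * ‖u‖ ^ 2 := by
  have h1 : Real.sqrt ((a ^ 2 + b ^ 2) ^ 2 * Real.cos (π - 0) ^ 2
      + 4 * a ^ 2 * b ^ 2 * Real.sin (π - 0) ^ 2) = a ^ 2 + b ^ 2 := by
    rw [show π - (0:ℝ) = π by ring, Real.cos_pi, Real.sin_pi,
      show ((a ^ 2 + b ^ 2) ^ 2 * (-1:ℝ) ^ 2 + 4 * a ^ 2 * b ^ 2 * 0 ^ 2)
        = (a ^ 2 + b ^ 2) ^ 2 by ring]
    exact Real.sqrt_sq (by positivity)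
  rw [dsq, h1, show (π - (0:ℝ)) / 2 = π / 2 by ring, Real.sin_pi_div_two]
  ring

lemma dsq_zero_pi_div_two (u : EuclideanSpace ℝ (Fin 2)) (a b : ℝ) (ha : 0 < a) (hb : 0 < b) :
    dsq u a b 0 (π / 2) = 2 * ‖u‖ ^ 2 + (a - b) ^ 2 / 2 := by
  have h1 : Real.sqrt ((a ^ 2 + b ^ 2) ^ 2 * Real.cos (π / 2 - 0) ^ 2
      + 4 * a ^ 2 * b ^ 2 * Real.sin (π / 2 - 0) ^ 2) = 2 * a * b := by
    rw [show π / 2 - (0:ℝ) = π / 2 by ring, Real.cos_pi_div_two, Real.sin_pi_div_two,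
      show ((a ^ 2 + b ^ 2) ^ 2 * (0:ℝ) ^ 2 + 4 * a ^ 2 * b ^ 2 * 1 ^ 2)
        = (2 * a * b) ^ 2 by ring]
    exact Real.sqrt_sq (by positivity)
  have h2 : Real.sin ((π / 2 - 0) / 2) ^ 2 = 1 / 2 := by
    rw [show (π / 2 - (0:ℝ)) / 2 = π / 4 by ring, Real.sin_pi_div_four,
      div_pow, Real.sq_sqrt (by norm_num : (0:ℝ) ≤ 2)]
    norm_num
  rw [dsq, h1, h2]
  ring

lemma dsq_zero_three_pi_div_two (u : EuclideanSpace ℝ (Fin 2)) (a b : ℝ)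
    (ha : 0 < a) (hb : 0 < b) :
    dsq u a b 0 (3 * π / 2) = 2 * ‖u‖ ^ 2 + (a - b) ^ 2 / 2 := by
  have hc : Real.cos (3 * π / 2 - 0) = 0 := by
    rw [show (3*π/2 - 0 : ℝ) = π + π/2 by ring, Real.cos_add]; simp
  have hs : Real.sin (3 * π / 2 - 0) = -1 := by
    rw [show (3*π/2 - 0 : ℝ) = π + π/2 by ring, Real.sin_add]; simp
  have h1 : Real.sqrt ((a ^ 2 + b ^ 2) ^ 2 * Real.cos (3 * π / 2 - 0) ^ 2
      + 4 * a ^ 2 * b ^ 2 * Real.sin (3 * π / 2 - 0) ^ 2) = 2 * a * b := by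
    rw [hc, hs, show ((a ^ 2 + b ^ 2) ^ 2 * (0:ℝ) ^ 2 + 4 * a ^ 2 * b ^ 2 * (-1) ^ 2)
        = (2 * a * b) ^ 2 by ring]
    exact Real.sqrt_sq (by positivity)
  have h2 : Real.sin ((3 * π / 2 - 0) / 2) ^ 2 = 1 / 2 := by
    rw [show ((3 * π / 2 - 0 : ℝ)) / 2 = π - π/4 by ring, Real.sin_pi_sub,
      Real.sin_pi_div_four, div_pow, Real.sq_sqrt (by norm_num : (0:ℝ) ≤ 2)]
    norm_num
  rw [dsq, h1, h2]
  ring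

lemma dsq_shift (u : EuclideanSpace ℝ (Fin 2)) (a b s t : ℝ) :
    dsq u a b s t = dsq u a b 0 (t - s) := by
  simp [dsq]

lemma norm_sub_sq_coords (v w : EuclideanSpace ℝ (Fin 2)) :
    ‖v - w‖ ^ 2 = (v 0 - w 0) ^ 2 + (v 1 - w 1) ^ 2 := by
  rw [EuclideanSpace.norm_eq, Real.sq_sqrt (by positivity)]
  simp [Fin.sum_univ_two, sq_abs]

lemma norm_sq_coords (v : EuclideanSpace ℝ (Fin 2)) :
    ‖v‖ ^ 2 = (v 0) ^ 2 + (v 1) ^ 2 := by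
  rw [EuclideanSpace.norm_eq, Real.sq_sqrt (by positivity)]
  simp [Fin.sum_univ_two, sq_abs]

set_option maxHeartbeats 1000000 in
/-- For `u ≠ 0` and `a ≠ b`: `4|u|² ≠ 4|u|² + (a−b)²`, so the inscribed-square constraint
`d(0,π)² = 2 d(0,π/2)²` fails, and there is no isometric embedding of `([0,2π], d)` into a
planar circle. -/
theorem no_circle_embedding_of_rotated_offcenter_ellipse
    (a b : ℝ) (ha : 0 < a) (hb : 0 < b) (hab : a ≠ b)
    (u : EuclideanSpace ℝ (Fin 2)) (hu : u ≠ 0) :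
    (4 * ‖u‖ ^ 2 ≠ 4 * ‖u‖ ^ 2 + (a - b) ^ 2) ∧
    (dsq u a b 0 π ≠ 2 * dsq u a b 0 (π / 2)) ∧
    ¬ ∃ (r : ℝ) (γ : ℝ → EuclideanSpace ℝ (Fin 2)), 0 < r ∧
      (∀ t ∈ Set.Icc (0 : ℝ) (2 * π), ‖γ t‖ = r) ∧
      (∀ s ∈ Set.Icc (0 : ℝ) (2 * π), ∀ t ∈ Set.Icc (0 : ℝ) (2 * π),
        ‖γ s - γ t‖ ^ 2 = dsq u a b s t) := by
  have hK : (0:ℝ) < (a - b) ^ 2 := by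
    have : a - b ≠ 0 := sub_ne_zero.mpr hab
    positivity
  have hU : (0:ℝ) < ‖u‖ ^ 2 := by
    have : ‖u‖ ≠ 0 := norm_ne_zero_iff.mpr hu
    positivity
  have hpi := Real.pi_pos
  refine ⟨by intro h; nlinarith, ?_, ?_⟩
  · rw [dsq_zero_pi u a b ha hb, dsq_zero_pi_div_two u a b ha hb]
    intro h; nlinarith
  rintro ⟨r, γ, hr, hnorm, hdist⟩
  -- the four points
  have m0 : (0:ℝ) ∈ Set.Icc (0:ℝ) (2*π) := ⟨le_refl _, by linarith⟩
  have m1 : (π/2:ℝ) ∈ Set.Icc (0:ℝ) (2*π) := ⟨by linarith, by linarith⟩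
  have m2 : (π:ℝ) ∈ Set.Icc (0:ℝ) (2*π) := ⟨by linarith, by linarith⟩
  have m3 : (3*π/2:ℝ) ∈ Set.Icc (0:ℝ) (2*π) := ⟨by linarith, by linarith⟩
  set x0 := γ 0 0; set y0 := γ 0 1
  set x1 := γ (π/2) 0; set y1 := γ (π/2) 1
  set x2 := γ π 0; set y2 := γ π 1
  set x3 := γ (3*π/2) 0; set y3 := γ (3*π/2) 1
  set U := ‖u‖ ^ 2 with hUdef
  set K := (a - b) ^ 2 with hKdef
  -- chord equations
  have h01 : (x0 - x1)^2 + (y0 - y1)^2 = 2*U + K/2 := by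
    rw [← norm_sub_sq_coords, hdist 0 m0 (π/2) m1, dsq_zero_pi_div_two u a b ha hb]
  have h12 : (x1 - x2)^2 + (y1 - y2)^2 = 2*U + K/2 := by
    rw [← norm_sub_sq_coords, hdist (π/2) m1 π m2, dsq_shift,
      show (π - π/2 : ℝ) = π/2 by ring, dsq_zero_pi_div_two u a b ha hb]
  have h23 : (x2 - x3)^2 + (y2 - y3)^2 = 2*U + K/2 := by
    rw [← norm_sub_sq_coords, hdist π m2 (3*π/2) m3, dsq_shift,
      show (3*π/2 - π : ℝ) = π/2 by ring, dsq_zero_pi_div_two u a b ha hb]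
  have h03 : (x0 - x3)^2 + (y0 - y3)^2 = 2*U + K/2 := by
    rw [← norm_sub_sq_coords, hdist 0 m0 (3*π/2) m3, dsq_shift,
      show (3*π/2 - 0 : ℝ) = 3*π/2 by ring, dsq_zero_three_pi_div_two u a b ha hb]
  have h02 : (x0 - x2)^2 + (y0 - y2)^2 = 4*U := by
    rw [← norm_sub_sq_coords, hdist 0 m0 π m2, dsq_shift,
      show (π - 0 : ℝ) = π by ring, dsq_zero_pi u a b ha hb]
  have h13 : (x1 - x3)^2 + (y1 - y3)^2 = 4*U := by
    rw [← norm_sub_sq_coords, hdist (π/2) m1 (3*π/2) m3, dsq_shift,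
      show (3*π/2 - π/2 : ℝ) = π by ring, dsq_zero_pi u a b ha hb]
  -- abbreviations for the two diagonals and the alternating sum
  set A := x0 - x2; set B := y0 - y2
  set C := x1 - x3; set D := y1 - y3
  set X := x0 - x1 + x2 - x3; set Y := y0 - y1 + y2 - y3
  have hAB : A^2 + B^2 = 4*U := h02
  have hCD : C^2 + D^2 = 4*U := h13
  have hPerp : A*C + B*D = 0 := by
    simp only [hKdef, hUdef] at h01 h03 h12 h23
    linear_combination (-h01 + h03 + h12 - h23) / 2
  have hX : X*A + Y*B = 0 := by
    linear_combination (h01 - h12 + h03 - h23) / 2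
  have hY : X*C + Y*D = 0 := by
    linear_combination (h03 - h01 + h23 - h12) / 2
  have hW : X^2 + Y^2 = 2*K := by
    linear_combination h01 - h02 + h03 + h12 - h13 + h23
  -- determinant is nonzero
  have hdet : (A*D - B*C)^2 = 16*U^2 := by
    linear_combination (C^2+D^2) * hAB + (4*U) * hCD - (A*C+B*D) * hPerp
  have hdetne : A*D - B*C ≠ 0 := by
    intro h; rw [h] at hdet; nlinarith
  have hX0 : X = 0 := by
    have : X * (A*D - B*C) = D*(X*A + Y*B) - B*(X*C + Y*D) := by ring
    rw [hX, hY] at this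
    have : X * (A*D - B*C) = 0 := by linarith [this]
    exact (mul_eq_zero.mp this).resolve_right hdetne
  have hY0 : Y = 0 := by
    have : Y * (A*D - B*C) = A*(X*C + Y*D) - C*(X*A + Y*B) := by ring
    rw [hX, hY] at this
    have : Y * (A*D - B*C) = 0 := by linarith [this]
    exact (mul_eq_zero.mp this).resolve_right hdetne
  rw [hX0, hY0] at hW
  nlinarith [hK]
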